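/- Let A be an n×n X-matrix with real entries and let λ ∈ ℂ be an eigenvalue of A (a root of its characteristic polynomial over ℂ). Then either n is odd and λ = a_{(n+1)/2,(n+1)/2}, or there exists an index i with 1 ≤ i ≤ ⌊n/2⌋ such that λ lies on the boundary of the corresponding Cassini oval: |λ − a_{i,i}| · |λ − a_{n−i+1,n−i+1}| = |a_{i,n−i+1} a_{n−i+1,i}|. -/

import Mathlib

/-!
An eigenvector `v` of an X-matrix couples only the coordinates `k` and `n + 1 - k`: the
rows `k` and `n + 1 - k` of `A v = λ v` say that `(v_k, v_{n+1-k})` is an eigenvector of the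
`2 × 2` block `[[a_{k,k}, a_{k,n+1-k}], [a_{n+1-k,k}, a_{n+1-k,n+1-k}]]` unless it vanishes.
Choosing `k` with `v_k ≠ 0`, either `k` is the centre of an odd-sized matrix and its row gives
`λ = a_{k,k}`, or `λ` is a root of the characteristic polynomial of that block,
`(λ - a_{k,k}) (λ - a_{n+1-k,n+1-k}) = a_{k,n+1-k} a_{n+1-k,k}`, and taking absolute values
puts `λ` on the boundary of the Cassini oval.
-/

open Matrix Polynomial

/-- An `n × n` matrix is an X-matrix if every entry off the diagonal and off the
anti-diagonal (1-based: `i ≠ j` and `i + j ≠ n + 1`) vanishes. -/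
def IsXMatrix {n : ℕ} (A : Matrix (Fin n) (Fin n) ℝ) : Prop :=
  ∀ i j : Fin n, i ≠ j → j ≠ i.rev → A i j = 0

/-- The inclusion of the first half of the indices, `Fin (n / 2) → Fin n`
(1-based: `i = 1, …, ⌊n/2⌋`). -/
def lowEmb (n : ℕ) : Fin (n / 2) → Fin n := Fin.castLE (Nat.div_le_self n 2)

theorem Matrix.exists_mulVec_eq_smul_of_isRoot_charpoly_map {K L : Type*} [Field K] [Field L]
    [Algebra K L] {ι : Type*} [Fintype ι] [DecidableEq ι] (A : Matrix ι ι K) {lam : L}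
    (h : (A.charpoly.map (algebraMap K L)).IsRoot lam) :
    ∃ v : ι → L, v ≠ 0 ∧ A.map (algebraMap K L) *ᵥ v = lam • v := by
  rw [← charpoly_map, ← Matrix.charpoly_toLin',
    ← Module.End.hasEigenvalue_iff_isRoot_charpoly] at h
  obtain ⟨v, hv⟩ := h.exists_hasEigenvector
  exact ⟨v, hv.2, by simpa using hv.apply_eq_smul⟩

theorem sub_mul_sub_eq_mul_of_cross_eq {R : Type*} [CommRing R] [NoZeroDivisors R]
    {l a b c d x y : R} (hxy : x ≠ 0 ∨ y ≠ 0) (hx : (l - a) * x = b * y)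
    (hy : (l - d) * y = c * x) : (l - a) * (l - d) = b * c := by
  rw [← sub_eq_zero]
  rcases hxy with hx0 | hy0
  · exact (mul_eq_zero.mp (by linear_combination (l - d) * hx + b * hy)).resolve_right hx0
  · exact (mul_eq_zero.mp (by linear_combination (l - a) * hy + c * hx)).resolve_right hy0

namespace Fin

variable {n : ℕ}

theorem two_mul_val_add_one_of_eq_rev {i : Fin n} (h : i = i.rev) : 2 * (i : ℕ) + 1 = n := by
  have := congrArg Fin.val h
  rw [val_rev] at this
  omega

theorem odd_of_eq_rev {i : Fin n} (h : i = i.rev) : Odd n :=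
  ⟨i, (two_mul_val_add_one_of_eq_rev h).symm⟩

end Fin

theorem exists_lowEmb_eq_or_rev_eq {n : ℕ} {i : Fin n} (h : i ≠ i.rev) :
    ∃ k : Fin (n / 2), lowEmb n k = i ∨ (lowEmb n k).rev = i := by
  have hi : (i : ℕ) ≠ n - (i + 1) := fun h' => h (Fin.ext (by rw [Fin.val_rev]; exact h'))
  rcases lt_or_ge (i : ℕ) (n / 2) with hlt | hge
  · exact ⟨⟨i, hlt⟩, Or.inl rfl⟩
  · refine ⟨⟨n - (i + 1), by omega⟩, Or.inr (Fin.ext ?_)⟩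
    simp only [lowEmb, Fin.val_rev, Fin.val_castLE]
    omega

theorem lowEmb_ne_rev {n : ℕ} (k : Fin (n / 2)) : lowEmb n k ≠ (lowEmb n k).rev := fun h => by
  have := Fin.two_mul_val_add_one_of_eq_rev h
  have := k.isLt
  simp only [lowEmb, Fin.val_castLE] at *
  omega

section AntiDiagonalSupport

variable {R : Type*} {n : ℕ} {B : Matrix (Fin n) (Fin n) R}

theorem mulVec_apply_eq_sum_pair_rev [NonUnitalNonAssocSemiring R]
    (hB : ∀ i j, i ≠ j → j ≠ i.rev → B i j = 0) (v : Fin n → R) (k : Fin n) :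
    (B *ᵥ v) k = ∑ j ∈ ({k, k.rev} : Finset (Fin n)), B k j * v j := by
  refine (Finset.sum_subset (Finset.subset_univ ({k, k.rev} : Finset (Fin n)))
    fun j _ hj => ?_).symm
  simp only [Finset.mem_insert, Finset.mem_singleton, not_or] at hj
  exact mul_eq_zero_of_left (hB k j (Ne.symm hj.1) hj.2) _

variable [CommRing R] [NoZeroDivisors R] {v : Fin n → R} {lam : R}

theorem eq_diag_of_mulVec_eq_smul_of_eq_rev (hB : ∀ i j, i ≠ j → j ≠ i.rev → B i j = 0)
    (hv : B *ᵥ v = lam • v) {k : Fin n} (hk : k = k.rev) (hvk : v k ≠ 0) :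
    lam = B k k := by
  have h := congrFun hv k
  rw [mulVec_apply_eq_sum_pair_rev hB, ← hk, Finset.pair_eq_singleton, Finset.sum_singleton,
    Pi.smul_apply, smul_eq_mul] at h
  exact (mul_right_cancel₀ hvk h).symm

theorem sub_diag_mul_sub_diag_eq_of_mulVec_eq_smul
    (hB : ∀ i j, i ≠ j → j ≠ i.rev → B i j = 0) (hv : B *ᵥ v = lam • v) {k : Fin n}
    (hk : k ≠ k.rev) (hvk : v k ≠ 0 ∨ v k.rev ≠ 0) :
    (lam - B k k) * (lam - B k.rev k.rev) = B k k.rev * B k.rev k := by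
  have row (i : Fin n) (hi : i ≠ i.rev) : (lam - B i i) * v i = B i i.rev * v i.rev := by
    have h := congrFun hv i
    rw [mulVec_apply_eq_sum_pair_rev hB, Finset.sum_pair hi, Pi.smul_apply, smul_eq_mul] at h
    linear_combination -h
  have hk' : k.rev ≠ k.rev.rev := by rwa [Fin.rev_rev, ne_comm]
  exact sub_mul_sub_eq_mul_of_cross_eq hvk (row k hk) (by simpa using row k.rev hk')

end AntiDiagonalSupport

/-- Every complex eigenvalue `λ` of a real X-matrix either equals the central entry
(`n` odd), or lies on the boundary of a Cassini oval:
`|λ - a_{i,i}| ⬝ |λ - a_{n-i+1,n-i+1}| = |a_{i,n-i+1} a_{n-i+1,i}|` for some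
`1 ≤ i ≤ ⌊n/2⌋`. -/
theorem xMatrix_eigenvalue_on_cassini_boundary {n : ℕ}
    (A : Matrix (Fin n) (Fin n) ℝ) (hA : IsXMatrix A) (lam : ℂ)
    (hlam : (A.charpoly.map (algebraMap ℝ ℂ)).IsRoot lam) :
    (∃ h : Odd n, lam = ((A ⟨n / 2, by rcases h with ⟨k, rfl⟩; omega⟩
        ⟨n / 2, by rcases h with ⟨k, rfl⟩; omega⟩ : ℝ) : ℂ)) ∨
    (∃ i : Fin (n / 2),
      ‖lam - ((A (lowEmb n i) (lowEmb n i) : ℝ) : ℂ)‖ *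
        ‖lam - ((A (lowEmb n i).rev (lowEmb n i).rev : ℝ) : ℂ)‖ =
      |A (lowEmb n i) (lowEmb n i).rev * A (lowEmb n i).rev (lowEmb n i)|) := by
  obtain ⟨v, hv0, hv⟩ := A.exists_mulVec_eq_smul_of_isRoot_charpoly_map hlam
  have hB : ∀ i j, i ≠ j → j ≠ i.rev → A.map (algebraMap ℝ ℂ) i j = 0 := fun i j h₁ h₂ => by
    simp [hA i j h₁ h₂]
  obtain ⟨i, hvi : v i ≠ 0⟩ := Function.ne_iff.mp hv0
  by_cases hi : i = i.rev
  · have hodd := Fin.odd_of_eq_rev hi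
    have hmid : i = ⟨n / 2, by rcases hodd with ⟨k, rfl⟩; omega⟩ :=
      Fin.ext (by have := Fin.two_mul_val_add_one_of_eq_rev hi; simp only; omega)
    refine Or.inl ⟨hodd, ?_⟩
    rw [← hmid]
    simpa using eq_diag_of_mulVec_eq_smul_of_eq_rev hB hv hi hvi
  · obtain ⟨k, hk⟩ := exists_lowEmb_eq_or_rev_eq hi
    have hvk : v (lowEmb n k) ≠ 0 ∨ v (lowEmb n k).rev ≠ 0 := by
      rcases hk with rfl | rfl
      exacts [Or.inl hvi, Or.inr hvi]
    refine Or.inr ⟨k, ?_⟩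
    have h := sub_diag_mul_sub_diag_eq_of_mulVec_eq_smul hB hv (lowEmb_ne_rev k) hvk
    simp only [Matrix.map_apply, Complex.coe_algebraMap] at h
    rw [← norm_mul, h, ← Complex.ofReal_mul, Complex.norm_real, Real.norm_eq_abs]
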